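/- Hodge decomposition for a finite-dimensional cochain complex: let V^{k−1} →^{d^{k−1}} V^k →^{d^k} V^{k+1} be finite-dimensional inner product spaces with d^k ∘ d^{k−1} = 0. Then V^k = ran(d^{k−1}) ⊕ ran((d^k)*) ⊕ H^k as an orthogonal direct sum, where H^k = ker(d^k) ∩ ker((d^{k−1})*) and * denotes the adjoint; moreover H^k is isomorphic to the cohomology ker(d^k)/ran(d^{k−1}). -/

import Mathlib

/-!
`ker d₂ = (ran d₂*)ᗮ` and `ker d₁* = (ran d₁)ᗮ`, so the harmonic space is the orthogonal
complement of `ran d₁ ⊔ ran d₂*`, which gives the decomposition of `V₂`; the two ranges are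
orthogonal because `ran d₁ ≤ ker d₂`. Inside `ker d₂` the harmonic space is the orthogonal
complement of `ran d₁`, hence a complement of it, and so isomorphic to `ker d₂ ⧸ ran d₁`.
-/

open LinearMap

namespace Submodule

variable {R M : Type*} [Ring R] [AddCommGroup M] [Module R M]

/-- Restricting a complement `q` of `p` to a submodule `K ≥ p` gives a complement of `p` in `K`. -/
noncomputable def infEquivQuotientOfIsCompl {p q K : Submodule R M} (h : IsCompl p q)
    (hpK : p ≤ K) : (K ⊓ q : Submodule R M) ≃ₗ[R] K ⧸ p.comap K.subtype :=
  have hq : q.comap K.subtype = (K ⊓ q).comap K.subtype := by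
    rw [comap_inf, comap_subtype_self, top_inf_eq]
  (comapSubtypeEquivOfLe inf_le_left).symm.trans <| (LinearEquiv.ofEq _ _ hq).symm.trans
    (quotientEquivOfIsCompl _ _ (isCompl_comap_subtype_of_isCompl_of_le h hpK)).symm

end Submodule

section HarmonicSpace

variable {𝕜 E F G : Type*} [RCLike 𝕜]
  [NormedAddCommGroup E] [InnerProductSpace 𝕜 E] [FiniteDimensional 𝕜 E]
  [NormedAddCommGroup F] [InnerProductSpace 𝕜 F] [FiniteDimensional 𝕜 F]
  [AddCommGroup G] [Module 𝕜 G]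

noncomputable def harmonicSpace (d₁ : E →ₗ[𝕜] F) (d₂ : F →ₗ[𝕜] G) : Submodule 𝕜 F :=
  ker d₂ ⊓ ker d₁.adjoint

variable (d₁ : E →ₗ[𝕜] F) (d₂ : F →ₗ[𝕜] G)

theorem harmonicSpace_eq_inf_orthogonal_range : harmonicSpace d₁ d₂ = ker d₂ ⊓ (range d₁)ᗮ := by
  rw [harmonicSpace, orthogonal_range]

noncomputable def harmonicSpaceEquivCohomology (h : range d₁ ≤ ker d₂) :
    harmonicSpace d₁ d₂ ≃ₗ[𝕜] ker d₂ ⧸ (range d₁).comap (ker d₂).subtype :=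
  (LinearEquiv.ofEq _ _ (harmonicSpace_eq_inf_orthogonal_range d₁ d₂)).trans
    (Submodule.infEquivQuotientOfIsCompl (range d₁).isCompl_orthogonal h)

end HarmonicSpace

section HodgeDecomposition

variable {𝕜 E F G : Type*} [RCLike 𝕜]
  [NormedAddCommGroup E] [InnerProductSpace 𝕜 E]
  [NormedAddCommGroup F] [InnerProductSpace 𝕜 F] [FiniteDimensional 𝕜 F]
  [NormedAddCommGroup G] [InnerProductSpace 𝕜 G] [FiniteDimensional 𝕜 G]
  (d₁ : E →ₗ[𝕜] F) (d₂ : F →ₗ[𝕜] G)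

theorem isOrtho_range_range_adjoint (h : range d₁ ≤ ker d₂) : range d₁ ⟂ range d₂.adjoint :=
  (Submodule.isOrtho_iff_le.mpr <| orthogonal_ker d₂ ▸ Submodule.orthogonal_le h).symm

variable [FiniteDimensional 𝕜 E]

theorem harmonicSpace_eq_orthogonal_sup :
    harmonicSpace d₁ d₂ = (range d₁ ⊔ range d₂.adjoint)ᗮ := by
  rw [harmonicSpace_eq_inf_orthogonal_range, ← Submodule.inf_orthogonal, ← orthogonal_ker,
    Submodule.orthogonal_orthogonal, inf_comm]

theorem isOrtho_range_harmonicSpace : range d₁ ⟂ harmonicSpace d₁ d₂ := by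
  rw [harmonicSpace_eq_orthogonal_sup]
  exact (Submodule.isOrtho_orthogonal_right _).mono_left le_sup_left

theorem isOrtho_range_adjoint_harmonicSpace : range d₂.adjoint ⟂ harmonicSpace d₁ d₂ := by
  rw [harmonicSpace_eq_orthogonal_sup]
  exact (Submodule.isOrtho_orthogonal_right _).mono_left le_sup_right

theorem sup_range_range_adjoint_harmonicSpace :
    range d₁ ⊔ range d₂.adjoint ⊔ harmonicSpace d₁ d₂ = ⊤ := by
  rw [harmonicSpace_eq_orthogonal_sup]
  exact Submodule.sup_orthogonal_of_hasOrthogonalProjection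

end HodgeDecomposition

/-- Hodge decomposition for a finite-dimensional cochain complex
`V₁ →^{d₁} V₂ →^{d₂} V₃` with `d₂ ∘ d₁ = 0`: the middle space decomposes as the
orthogonal direct sum `V₂ = ran d₁ ⊕ ran d₂* ⊕ H` with
`H = ker d₂ ⊓ ker d₁*` the harmonic space, and `H` is isomorphic to the
cohomology `ker d₂ / ran d₁`. -/
theorem hodge_decomposition_finite_dimensional {V₁ V₂ V₃ : Type*}
    [NormedAddCommGroup V₁] [InnerProductSpace ℝ V₁] [FiniteDimensional ℝ V₁]
    [NormedAddCommGroup V₂] [InnerProductSpace ℝ V₂] [FiniteDimensional ℝ V₂]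
    [NormedAddCommGroup V₃] [InnerProductSpace ℝ V₃] [FiniteDimensional ℝ V₃]
    (d₁ : V₁ →ₗ[ℝ] V₂) (d₂ : V₂ →ₗ[ℝ] V₃)
    (hdd : ∀ x : V₁, d₂ (d₁ x) = 0) :
    (∀ x ∈ LinearMap.range d₁, ∀ y ∈ LinearMap.range (LinearMap.adjoint d₂),
      (inner ℝ x y : ℝ) = 0) ∧
    (∀ x ∈ LinearMap.range d₁,
      ∀ y ∈ LinearMap.ker d₂ ⊓ LinearMap.ker (LinearMap.adjoint d₁),
      (inner ℝ x y : ℝ) = 0) ∧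
    (∀ x ∈ LinearMap.range (LinearMap.adjoint d₂),
      ∀ y ∈ LinearMap.ker d₂ ⊓ LinearMap.ker (LinearMap.adjoint d₁),
      (inner ℝ x y : ℝ) = 0) ∧
    (LinearMap.range d₁ ⊔ LinearMap.range (LinearMap.adjoint d₂) ⊔
      (LinearMap.ker d₂ ⊓ LinearMap.ker (LinearMap.adjoint d₁)) = ⊤) ∧
    Nonempty
      ((LinearMap.ker d₂ ⊓ LinearMap.ker (LinearMap.adjoint d₁) : Submodule ℝ V₂) ≃ₗ[ℝ]
        (LinearMap.ker d₂ ⧸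
          Submodule.comap (LinearMap.ker d₂).subtype (LinearMap.range d₁))) := by
  have hcomplex : range d₁ ≤ ker d₂ := range_le_ker_iff.mpr (LinearMap.ext hdd)
  exact ⟨fun _ hx _ hy ↦ (isOrtho_range_range_adjoint d₁ d₂ hcomplex).inner_eq hx hy,
    fun _ hx _ hy ↦ (isOrtho_range_harmonicSpace d₁ d₂).inner_eq hx hy,
    fun _ hx _ hy ↦ (isOrtho_range_adjoint_harmonicSpace d₁ d₂).inner_eq hx hy,
    sup_range_range_adjoint_harmonicSpace d₁ d₂,
    ⟨harmonicSpaceEquivCohomology d₁ d₂ hcomplex⟩⟩
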